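/- In the setting of the main quadrature theorem, any admissible node set X (nonempty intersection with [x_n,1] and S_k-invariance structure for k = 0,…,n−1) has cardinality at least 2^{n−1}; if additionally max X = x_n, then |X| = 2^{n−1} exactly. -/
import Mathlib


noncomputable def xseq : ℕ → ℝ
  | 0 => -1
  | n + 1 => Real.sqrt ((1 + xseq n) / 2)
/-- `Q p` is the Chebyshev polynomial of degree `2^p`, the `p`-fold composite of `2x²-1`. -/
noncomputable def Q (p : ℕ) : ℝ → ℝ := (fun t : ℝ => 2 * t ^ 2 - 1)^[p]
/-- `S` is the reflection associated to `P_{2^k}` on `[x_{k+1}, 1]`. -/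
def IsReflection (k : ℕ) (S : ℝ → ℝ) : Prop :=
  Set.BijOn S (Set.Icc (xseq (k + 1)) 1) (Set.Icc (xseq k) (xseq (k + 1))) ∧
  ∀ y ∈ Set.Icc (xseq (k + 1)) 1, Q k (S y) = -(Q k y)

lemma xseq_bounds : ∀ k, -1 ≤ xseq k ∧ xseq k < 1 := by
  intro k
  induction k with
  | zero => norm_num [xseq]
  | succ k ih =>
    obtain ⟨h1, h2⟩ := ih
    constructor
    · have := Real.sqrt_nonneg ((1 + xseq k) / 2)
      show (-1 : ℝ) ≤ Real.sqrt ((1 + xseq k) / 2)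
      linarith
    · show Real.sqrt ((1 + xseq k) / 2) < 1
      have h := Real.sqrt_lt_sqrt (x := (1 + xseq k) / 2) (y := 1) (by linarith) (by linarith)
      simpa using h

lemma xseq_nonneg (k : ℕ) : 0 ≤ xseq (k + 1) := Real.sqrt_nonneg _

lemma xseq_sq (k : ℕ) : xseq (k + 1) ^ 2 = (1 + xseq k) / 2 := by
  show Real.sqrt ((1 + xseq k) / 2) ^ 2 = (1 + xseq k) / 2
  rw [Real.sq_sqrt]
  have := (xseq_bounds k).1
  linarith

lemma xseq_lt_succ (k : ℕ) : xseq k < xseq (k + 1) := by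
  obtain ⟨h1, h2⟩ := xseq_bounds k
  rcases lt_or_ge (xseq k) 0 with h | h
  · exact lt_of_lt_of_le h (xseq_nonneg k)
  · have hsq := xseq_sq k
    have h3 : xseq k ^ 2 < xseq (k + 1) ^ 2 := by nlinarith
    have := xseq_nonneg k
    nlinarith

lemma Q_succ (k : ℕ) (x : ℝ) : Q (k + 1) x = Q k (2 * x ^ 2 - 1) :=
   Function.iterate_succ_apply (fun t : ℝ => 2 * t ^ 2 - 1) k x

lemma Q_xseq : ∀ k, Q k (xseq k) = -1 := by
  intro k
  induction k with
  | zero => simp [Q, xseq]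
  | succ k ih =>
    rw [Q_succ, xseq_sq]
    have : 2 * ((1 + xseq k) / 2) - 1 = xseq k := by ring
    rw [this, ih]

lemma Q_lt_one : ∀ k, ∀ y : ℝ, xseq k ≤ y → y < 1 → Q k y < 1 := by
  intro k
  induction k with
  | zero => intro y _ hy; simpa [Q] using hy
  | succ k ih =>
    intro y h1 h2
    rw [Q_succ]
    have hy0 : 0 ≤ y := le_trans (xseq_nonneg k) h1
    have hsq := xseq_sq k
    have hyx : xseq (k + 1) ^ 2 ≤ y ^ 2 := by nlinarith [xseq_nonneg k]
    apply ih
    · nlinarith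
    · nlinarith

/-- Any admissible node set has at least `2^{n-1}` points; if moreover its largest
element is `x_n`, it has exactly `2^{n-1}` points. -/
theorem node_count (n : ℕ) (hn : 1 ≤ n) (S : ℕ → ℝ → ℝ)
    (hS : ∀ k < n, IsReflection k (S k))
    (X : Finset ℝ) (hX1 : (X : Set ℝ) ⊆ Set.Ioo (-1 : ℝ) 1)
    (hX2 : ∃ x ∈ X, x ∈ Set.Icc (xseq n) 1)
    (hX3 : ∀ k < n,
      S k '' ((X : Set ℝ) ∩ Set.Icc (xseq (k + 1)) 1)
        = (X : Set ℝ) ∩ Set.Icc (xseq k) (xseq (k + 1))) :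
    2 ^ (n - 1) ≤ X.card ∧
      ((xseq n ∈ X ∧ ∀ x ∈ X, x ≤ xseq n) → X.card = 2 ^ (n - 1)) := by
  classical
  have hlt1 : ∀ x ∈ X, x < 1 := fun x hx => (hX1 hx).2
  have hgt : ∀ x ∈ X, -1 < x := fun x hx => (hX1 hx).1
  set A : ℕ → Finset ℝ := fun j => X.filter (fun x => xseq j ≤ x) with hA
  have coeA : ∀ j, (A j : Set ℝ) = (X : Set ℝ) ∩ Set.Icc (xseq j) 1 := by
    intro j; ext x
    simp only [hA, Finset.coe_filter, Set.mem_setOf_eq, Set.mem_inter_iff,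
      Set.mem_Icc, Finset.mem_coe]
    constructor
    · rintro ⟨hx, hle⟩; exact ⟨hx, hle, (hlt1 x hx).le⟩
    · rintro ⟨hx, hle, _⟩; exact ⟨hx, hle⟩
  set B : ℕ → Finset ℝ := fun k => X.filter (fun x => xseq k ≤ x ∧ x ≤ xseq (k + 1)) with hB
  have coeB : ∀ k, (B k : Set ℝ) = (X : Set ℝ) ∩ Set.Icc (xseq k) (xseq (k + 1)) := by
    intro k; ext x
    simp [hB, Set.mem_Icc, and_assoc]
  -- interior nodes are not in X
  have hnotmem : ∀ j, 0 < j → j < n → xseq j ∉ X := by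
    intro j hj0 hjn hmem
    obtain ⟨k, rfl⟩ : ∃ k, j = k + 1 := ⟨j - 1, (Nat.succ_pred_eq_of_pos hj0).symm⟩
    have hkey : xseq (k + 1) ∈ (X : Set ℝ) ∩ Set.Icc (xseq (k + 1)) (xseq (k + 2)) :=
      ⟨hmem, le_refl _, (xseq_lt_succ (k + 1)).le⟩
    rw [← hX3 (k + 1) hjn] at hkey
    obtain ⟨y, ⟨hyX, hy1, hy2⟩, hSy⟩ := hkey
    have hQ := (hS (k + 1) hjn).2 y ⟨hy1, hy2⟩
    rw [hSy, Q_xseq] at hQ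
    have hQy : Q (k + 1) y = 1 := by linarith
    have : Q (k + 1) y < 1 :=
      Q_lt_one (k + 1) y (le_trans (xseq_lt_succ (k + 1)).le hy1) (hlt1 y hyX)
    linarith
  -- cardinality relation
  have hcard : ∀ k < n, (A k).card + (B k ∩ A (k + 1)).card = 2 * (A (k + 1)).card := by
    intro k hk
    have hinj : Set.InjOn (S k) (A (k + 1) : Set ℝ) := by
      apply ((hS k hk).1.injOn).mono
      rw [coeA]; exact Set.inter_subset_right
    have himg : (A (k + 1)).image (S k) = B k := by
      apply Finset.coe_injective
      rw [Finset.coe_image, coeA, coeB]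
      exact hX3 k hk
    have hBcard : (B k).card = (A (k + 1)).card := by
      rw [← himg]; exact Finset.card_image_of_injOn hinj
    have hunion : B k ∪ A (k + 1) = A k := by
      ext x
      simp only [hA, hB, Finset.mem_union, Finset.mem_filter]
      constructor
      · rintro (⟨hx, h1, _⟩ | ⟨hx, h1⟩)
        · exact ⟨hx, h1⟩
        · exact ⟨hx, le_trans (xseq_lt_succ k).le h1⟩
      · rintro ⟨hx, h1⟩
        rcases le_total x (xseq (k + 1)) with h | h
        · exact Or.inl ⟨hx, h1, h⟩
        · exact Or.inr ⟨hx, h⟩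
    have hu := Finset.card_union_add_card_inter (B k) (A (k + 1))
    rw [hunion, hBcard] at hu
    omega
  have hdouble : ∀ k, k + 1 < n → (A k).card = 2 * (A (k + 1)).card := by
    intro k hk
    have h0 := hcard k (by omega)
    have hempty : B k ∩ A (k + 1) = ∅ := by
      rw [Finset.eq_empty_iff_forall_notMem]
      intro x hx
      simp only [hB, hA, Finset.mem_inter, Finset.mem_filter] at hx
      have hxe : x = xseq (k + 1) := le_antisymm hx.1.2.2 hx.2.2
      exact hnotmem (k + 1) k.succ_pos hk (hxe ▸ hx.1.1)
    rw [hempty] at h0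
    simpa using h0
  obtain ⟨m, rfl⟩ : ∃ m, n = m + 1 := ⟨n - 1, by omega⟩
  have hchain : ∀ j, j ≤ m → (A 0).card = 2 ^ j * (A j).card := by
    intro j hj
    induction j with
    | zero => simp
    | succ j ih =>
      rw [ih (by omega), hdouble j (by omega), pow_succ]
      ring
  have hA0 : A 0 = X := by
    apply Finset.filter_true_of_mem
    intro x hx
    have := hgt x hx
    show xseq 0 ≤ x
    simp only [xseq]
    linarith
  have hXA : X.card = 2 ^ m * (A m).card := by
    rw [← hA0]; exact hchain m le_rfl
  have hAn1 : 1 ≤ (A (m + 1)).card := by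
    obtain ⟨x, hxX, hx1, _⟩ := hX2
    apply Finset.card_pos.mpr
    exact ⟨x, Finset.mem_filter.mpr ⟨hxX, hx1⟩⟩
  have hintsub : B m ∩ A (m + 1) ⊆ {xseq (m + 1)} := by
    intro x hx
    simp only [hB, hA, Finset.mem_inter, Finset.mem_filter] at hx
    simp [le_antisymm hx.1.2.2 hx.2.2]
  have hm := hcard m (by omega)
  constructor
  · have hint1 : (B m ∩ A (m + 1)).card ≤ 1 := by
      simpa using Finset.card_le_card hintsub
    have hAm : 1 ≤ (A m).card := by omega
    calc 2 ^ (m + 1 - 1) = 2 ^ m * 1 := by simp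
    _ ≤ 2 ^ m * (A m).card := by exact Nat.mul_le_mul_left _ hAm
    _ = X.card := hXA.symm
  · rintro ⟨hmem, hmax⟩
    have hAeq : A (m + 1) = {xseq (m + 1)} := by
      apply Finset.Subset.antisymm
      · intro x hx
        simp only [hA, Finset.mem_filter] at hx
        simp [le_antisymm (hmax x hx.1) hx.2]
      · intro x hx
        rw [Finset.mem_singleton] at hx
        subst hx
        exact Finset.mem_filter.mpr ⟨hmem, le_refl _⟩
    have hinteq : B m ∩ A (m + 1) = {xseq (m + 1)} := by
      apply Finset.Subset.antisymm hintsub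
      intro x hx
      rw [Finset.mem_singleton] at hx
      subst hx
      refine Finset.mem_inter.mpr ⟨?_, Finset.mem_filter.mpr ⟨hmem, le_refl _⟩⟩
      exact Finset.mem_filter.mpr ⟨hmem, (xseq_lt_succ m).le, le_refl _⟩
    rw [hinteq, hAeq] at hm
    simp only [Finset.card_singleton] at hm
    have : (A m).card = 1 := by omega
    rw [hXA, this]
    simp
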